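/- There is an absolute constant C > 0 such that the following holds. Let X be a countable data domain, A : X^n → Y an (ε,δ)-differentially private algorithm, and X = (X₁,…,X_n) ~ P^n, with ε ∈ (0, 1/2] and δ̂ ∈ (0, ε/15]. Define T_i(a, x₁^i) = Z_i(a, x₁^i) if (a, x₁^i) ∈ G_{≤i}(δ̂) and T_i(a, x₁^i) = 0 otherwise, where Z_i(a, x₁^i) = log₂( Pr[X_i = x_i | A(X) = a, X₁^{i−1} = x₁^{i−1}] / Pr[X_i = x_i] ). Then: (1) |T_i(A(X), X₁^i)| ≤ 6ε·log₂(e) with probability 1; and (2) for every (a, x₁^{i−1}) ∈ Y × X^{i−1}, E[ T_i(A(X), X₁^i) | A(X) = a, X₁^{i−1} = x₁^{i−1} ] ≤ C·( ε² + δ̂/ε ), where the bound does not depend on n or i. -/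

import Mathlib

open scoped ENNReal

/-- The probability that a sample from the probability mass function `μ` lands in `S`. -/
noncomputable def prob {α : Type*} (μ : PMF α) (S : Set α) : ℝ :=
  (μ.toOuterMeasure S).toReal

/-- The independent coupling of two distributions: a pair whose components are independent
with the given marginal distributions. -/
noncomputable def indepPair {α β : Type*} (p : PMF α) (q : PMF β) : PMF (α × β) :=
  p.bind fun a => q.map fun b => (a, b)

/-- `MaxInfoLe μ b k` : the `b`-approximate max-information of the joint distribution `μ`
is at most `k` (measured in bits):  for every event `O` with `Pr[(X,Z) ∈ O] > b`,
`Pr[(X,Z) ∈ O] - b ≤ 2^k · Pr[X ⊗ Z ∈ O]`. -/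
def MaxInfoLe {α β : Type*} (μ : PMF (α × β)) (b k : ℝ) : Prop :=
  ∀ O : Set (α × β), b < prob μ O →
    prob μ O - b ≤ 2 ^ k * prob (indepPair (μ.map Prod.fst) (μ.map Prod.snd)) O

/-- The `n`-fold product (i.i.d.) distribution `P^n` on datasets of size `n`. -/
noncomputable def iidPMF {X : Type*} (P : PMF X) : (n : ℕ) → PMF (Fin n → X)
  | 0 => PMF.pure (fun i => i.elim0)
  | n + 1 => P.bind fun a => (iidPMF P n).map fun x => Fin.cons a x

/-- The joint distribution of `(X, A(X))` where `X ∼ μ` and `A` is a randomized algorithm. -/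
noncomputable def jointPMF {D Y : Type*} (μ : PMF D) (A : D → PMF Y) : PMF (D × Y) :=
  μ.bind fun x => (A x).map fun y => (x, y)
/-- Two datasets are neighboring if they differ in at most one entry. -/
def Neighbor {X : Type*} {n : ℕ} (x x' : Fin n → X) : Prop :=
  ∃ i : Fin n, ∀ j : Fin n, j ≠ i → x j = x' j

/-- `(ε,δ)`-differential privacy of a randomized algorithm `A` on datasets of size `n`. -/
def DiffPrivate {X Y : Type*} {n : ℕ} (A : (Fin n → X) → PMF Y) (ε δ : ℝ) : Prop :=
  ∀ x x' : Fin n → X, Neighbor x x' → ∀ O : Set Y,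
    prob (A x) O ≤ Real.exp ε * prob (A x') O + δ

/-- `PrefixEq i w x` : the dataset `x` agrees with `w` on all coordinates before `i`
(i.e. `x` has prefix `x₁^{i-1} = w₁^{i-1}`). -/
def PrefixEq {X : Type*} {n : ℕ} (i : Fin n) (w x : Fin n → X) : Prop :=
  ∀ j : Fin n, (j : ℕ) < (i : ℕ) → x j = w j

/-- The conditional probability `Pr[X_i ∈ O | A(X) = a, X₁^{i-1} = w₁^{i-1}]`, computed from the
joint distribution `μ` of the pair `(X, A(X))`. -/
noncomputable def condXi {X Y : Type*} {n : ℕ} (μ : PMF ((Fin n → X) × Y)) (i : Fin n)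
    (a : Y) (w : Fin n → X) (O : Set X) : ℝ :=
  prob μ {p | p.2 = a ∧ PrefixEq i w p.1 ∧ p.1 i ∈ O} /
    prob μ {p | p.2 = a ∧ PrefixEq i w p.1}

/-- `(ε,δ)`-indistinguishability of two distributions presented as set functions. -/
def IndistFn {D : Type*} (F G : Set D → ℝ) (ε δ : ℝ) : Prop :=
  ∀ O : Set D, F O ≤ Real.exp ε * G O + δ ∧ G O ≤ Real.exp ε * F O + δ

/-- The set `E_i(δ̂)` of "good" output/prefix pairs `(a, x₁^{i-1})`: those for which the marginal
distribution of `X_i` is `(3ε, δ̂)`-indistinguishable from the conditional distribution of `X_i`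
given `A(X) = a` and `X₁^{i-1} = x₁^{i-1}`. -/
def Eset {X Y : Type*} {n : ℕ} (μ : PMF ((Fin n → X) × Y)) (P : PMF X) (i : Fin n)
    (ε δhat : ℝ) : Set (Y × (Fin n → X)) :=
  {q | IndistFn (fun O => prob P O) (fun O => condXi μ i q.1 q.2 O) (3 * ε) δhat}

/-- The set `F_i` of output/prefix pairs `(a, x₁^i)` for which the likelihood ratio
`Pr[X_i = x_i | a, x₁^{i-1}] / Pr[X_i = x_i]` lies in `[e^{-6ε}, e^{6ε}]`. -/
def Fset {X Y : Type*} {n : ℕ} (μ : PMF ((Fin n → X) × Y)) (P : PMF X) (i : Fin n)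
    (ε : ℝ) : Set (Y × (Fin n → X)) :=
  {q | Real.exp (-(6 * ε)) ≤ condXi μ i q.1 q.2 {q.2 i} / (P (q.2 i)).toReal ∧
       condXi μ i q.1 q.2 {q.2 i} / (P (q.2 i)).toReal ≤ Real.exp (6 * ε)}

/-- `Z_i(a, x₁^i) = log₂( Pr[X_i = x_i | a, x₁^{i-1}] / Pr[X_i = x_i] )`. -/
noncomputable def Zi {X Y : Type*} {n : ℕ} (μ : PMF ((Fin n → X) × Y)) (P : PMF X)
    (i : Fin n) (q : Y × (Fin n → X)) : ℝ :=
  Real.logb 2 (condXi μ i q.1 q.2 {q.2 i} / (P (q.2 i)).toReal)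

/-- The set `G_i(δ̂)` of "good" tuples: `(a, x₁^{i-1}) ∈ E_i(δ̂)` and `(a, x₁^i) ∈ F_i`. -/
def Gset {X Y : Type*} {n : ℕ} (μ : PMF ((Fin n → X) × Y)) (P : PMF X) (i : Fin n)
    (ε δhat : ℝ) : Set (Y × (Fin n → X)) :=
  {q | q ∈ Eset μ P i ε δhat ∧ q ∈ Fset μ P i ε}

/-- `G_{≤ i}(δ̂)` : membership in `G_j(δ̂)` for every `j ≤ i`. -/
def GleSet {X Y : Type*} {n : ℕ} (μ : PMF ((Fin n → X) × Y)) (P : PMF X) (i : Fin n)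
    (ε δhat : ℝ) : Set (Y × (Fin n → X)) :=
  {q | ∀ j : Fin n, j ≤ i → q ∈ Gset μ P j ε δhat}

/-- `T_i(a, x₁^i)` equals `Z_i(a, x₁^i)` on the good set `G_{≤ i}(δ̂)` and `0` otherwise. -/
noncomputable def Ti {X Y : Type*} {n : ℕ} (μ : PMF ((Fin n → X) × Y)) (P : PMF X)
    (i : Fin n) (ε δhat : ℝ) : (Y × (Fin n → X)) → ℝ :=
  (GleSet μ P i ε δhat).indicator (Zi μ P i)

/-! On `G_{≤ i}` the likelihood ratio `r = Pr[X_i = v | a, x₁^{i-1}] / P(v)` lies in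
`[e^{-6ε}, e^{6ε}]`, which gives the almost sure bound. For the conditional expectation, fix
`(a, x₁^{i-1})`: either no continuation `v` is good, or `(a, x₁^{i-1}) ∈ E_i` and the good `v` are
exactly those with `r(v)` in that interval. Writing `q` for the conditional law of `X_i`,
`log r ≤ r - 1` bounds `q log r` by `(q - P) + P (r - 1)² = (q - P) + O(ε²) P` on the good set, so
the expectation is at most `P(bad) + O(ε²)`. The bad set is covered by the two tails where
`q > e^{6ε} P` or `P > e^{6ε} q`, and `(3ε, δ̂)`-indistinguishability of `q` and `P` gives
each tail `P`-mass `O(δ̂/ε)`. -/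

open Real Set Function

section Prob

variable {α β : Type*}

lemma PMF.toOuterMeasure_apply_ne_top (μ : PMF α) (s : Set α) : μ.toOuterMeasure s ≠ ⊤ := by
  rw [PMF.toOuterMeasure_apply]
  exact μ.tsum_coe_indicator_ne_top s

lemma prob_nonneg (μ : PMF α) (s : Set α) : 0 ≤ prob μ s := ENNReal.toReal_nonneg

lemma prob_univ (μ : PMF α) : prob μ univ = 1 := by
  simp [prob, PMF.toOuterMeasure_apply, μ.tsum_coe]

lemma prob_singleton (μ : PMF α) (a : α) : prob μ {a} = (μ a).toReal := by
  rw [prob, PMF.toOuterMeasure_apply_singleton]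

lemma prob_map (μ : PMF α) (g : α → β) (t : Set β) : prob (μ.map g) t = prob μ (g ⁻¹' t) := by
  rw [prob, PMF.toOuterMeasure_map_apply, prob]

lemma PMF.summable_toReal (μ : PMF α) : Summable fun a => (μ a).toReal :=
  ENNReal.summable_toReal μ.tsum_coe_ne_top

lemma prob_eq_tsum (μ : PMF α) (s : Set α) :
    prob μ s = ∑' a, s.indicator (fun a => (μ a).toReal) a := by
  rw [prob, PMF.toOuterMeasure_apply, ENNReal.tsum_toReal_eq fun a => ?_]
  · exact tsum_congr fun a => (indicator_comp_of_zero (g := ENNReal.toReal) rfl).symm ▸ rfl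
  · exact ne_top_of_le_ne_top (μ.apply_ne_top a) (indicator_le_self s μ a)

lemma prob_add_prob_compl (μ : PMF α) (s : Set α) : prob μ s + prob μ sᶜ = 1 := by
  rw [prob_eq_tsum, prob_eq_tsum, ← Summable.tsum_add (μ.summable_toReal.indicator s)
    (μ.summable_toReal.indicator sᶜ)]
  simp only [indicator_self_add_compl_apply]
  rw [← ENNReal.tsum_toReal_eq μ.apply_ne_top, μ.tsum_coe, ENNReal.toReal_one]

lemma prob_le_one (μ : PMF α) (s : Set α) : prob μ s ≤ 1 := by
  linarith [prob_add_prob_compl μ s, prob_nonneg μ sᶜ]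

lemma prob_union_le (μ : PMF α) (s t : Set α) : prob μ (s ∪ t) ≤ prob μ s + prob μ t :=
  ENNReal.toReal_le_add (MeasureTheory.measure_union_le s t) (μ.toOuterMeasure_apply_ne_top s)
    (μ.toOuterMeasure_apply_ne_top t)

lemma prob_le_of_inter_support_subset (μ : PMF α) {s t : Set α} (h : s ∩ μ.support ⊆ t) :
    prob μ s ≤ prob μ t :=
  ENNReal.toReal_mono (μ.toOuterMeasure_apply_ne_top t) (μ.toOuterMeasure_mono h)

lemma mul_prob_le_prob {p q : PMF α} {c : ℝ} {s : Set α}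
    (h : ∀ a ∈ s, c * (p a).toReal ≤ (q a).toReal) : c * prob p s ≤ prob q s := by
  rw [prob_eq_tsum, prob_eq_tsum, ← tsum_mul_left]
  refine Summable.tsum_le_tsum (fun a => ?_) ((p.summable_toReal.indicator s).mul_left c)
    (q.summable_toReal.indicator s)
  by_cases ha : a ∈ s <;> simp [ha, h]

lemma PMF.toOuterMeasure_filter_apply (μ : PMF α) {s : Set α} (h : ∃ a ∈ s, a ∈ μ.support)
    (t : Set α) :
    (μ.filter s h).toOuterMeasure t = μ.toOuterMeasure (s ∩ t) / μ.toOuterMeasure s := by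
  simp only [PMF.toOuterMeasure_apply]
  rw [div_eq_mul_inv, ← ENNReal.tsum_mul_right]
  refine tsum_congr fun a => ?_
  by_cases hs : a ∈ s <;> by_cases ht : a ∈ t <;> simp [hs, ht]

lemma exists_prob_eq_prob_inter_preimage_div (μ : PMF α) {s : Set α} (hs : prob μ s ≠ 0)
    (g : α → β) : ∃ q : PMF β, ∀ t, prob q t = prob μ (s ∩ g ⁻¹' t) / prob μ s := by
  have h : ∃ a ∈ s, a ∈ μ.support := by
    have hs' : μ.toOuterMeasure s ≠ 0 := fun h0 => hs (by rw [prob, h0, ENNReal.toReal_zero])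
    obtain ⟨a, ha⟩ := not_disjoint_iff.1 (mt (μ.toOuterMeasure_apply_eq_zero_iff s).2 hs')
    exact ⟨a, ha.2, ha.1⟩
  refine ⟨(μ.filter s h).map g, fun t => ?_⟩
  rw [prob_map, prob, PMF.toOuterMeasure_filter_apply, ENNReal.toReal_div, prob, prob]

end Prob

section LikelihoodRatio

lemma abs_log_le_of_exp_neg_le {r t : ℝ} (h₁ : exp (-t) ≤ r) (h₂ : r ≤ exp t) : |log r| ≤ t := by
  have hr : 0 < r := (exp_pos _).trans_le h₁
  exact abs_le.2 ⟨(le_log_iff_exp_le hr).2 h₁, (log_le_iff_le_exp hr).2 h₂⟩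

lemma abs_sub_one_le_mul_exp {r t : ℝ} (ht : 0 ≤ t) (h₁ : exp (-t) ≤ r) (h₂ : r ≤ exp t) :
    |r - 1| ≤ t * exp t := by
  have hlow := one_sub_le_exp_neg t
  have hup : exp t * exp (-t) = 1 := by rw [← exp_add, add_neg_cancel, exp_zero]
  have h1 : 1 ≤ exp t := one_le_exp ht
  exact abs_le.2 ⟨by nlinarith, by nlinarith⟩

lemma mul_log_div_le {p q : ℝ} (hp : 0 < p) (hq : 0 ≤ q) :
    q * log (q / p) ≤ q - p + p * (q / p - 1) ^ 2 := by
  rcases hq.eq_or_lt with rfl | hq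
  · simp
  have h : q * log (q / p) ≤ q * (q / p - 1) :=
    mul_le_mul_of_nonneg_left (log_le_sub_one_of_pos (div_pos hq hp)) hq.le
  have h' : q * (q / p - 1) = q - p + p * (q / p - 1) ^ 2 := by field_simp; ring
  linarith

lemma mul_log_div_le_of_exp_neg_le {p q t : ℝ} (hq : 0 ≤ q) (ht : 0 ≤ t)
    (h₁ : exp (-t) ≤ q / p) (h₂ : q / p ≤ exp t) :
    q * log (q / p) ≤ q + ((t * exp t) ^ 2 - 1) * p := by
  have hp : 0 < p := by
    by_contra hp
    have h0 : q / p ≤ 0 := div_nonpos_of_nonneg_of_nonpos hq (not_lt.1 hp)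
    exact (exp_pos _).not_ge (h₁.trans h0)
  have hsq : (q / p - 1) ^ 2 ≤ (t * exp t) ^ 2 :=
    sq_le_sq' (abs_le.1 (abs_sub_one_le_mul_exp ht h₁ h₂)).1
      (abs_le.1 (abs_sub_one_le_mul_exp ht h₁ h₂)).2
  nlinarith [mul_log_div_le hp hq, mul_le_mul_of_nonneg_left hsq hp.le]

variable {α : Type*} {p q : PMF α} {c δ : ℝ}

lemma mul_prob_exp_mul_lt_le (hc : 0 ≤ c) (h : ∀ s, prob q s ≤ exp c * prob p s + δ) :
    c * prob p {a | exp (2 * c) * (p a).toReal < (q a).toReal} ≤ δ := by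
  set T := {a | exp (2 * c) * (p a).toReal < (q a).toReal}
  have hT : exp (2 * c) * prob p T ≤ prob q T := mul_prob_le_prob fun a ha => le_of_lt ha
  have hexp : exp (2 * c) = exp c * exp c := by rw [← exp_add, two_mul]
  have hc' : c ≤ exp c - 1 := by linarith [add_one_le_exp c]
  have h1 : 1 ≤ exp c := one_le_exp hc
  have hpT := prob_nonneg p T
  nlinarith [h T, mul_le_mul_of_nonneg_right hc' hpT,
    mul_le_mul_of_nonneg_right h1 (mul_nonneg (sub_nonneg.2 (hc'.trans' hc)) hpT)]

lemma mul_prob_compl_ratio_le (hc : 0 ≤ c) (hpq : IndistFn (prob p) (prob q) c δ) :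
    c * prob p {a | exp (-(2 * c)) ≤ (q a).toReal / (p a).toReal ∧
      (q a).toReal / (p a).toReal ≤ exp (2 * c)}ᶜ ≤ (1 + c + exp c) * δ := by
  set Tp := {a | exp (2 * c) * (p a).toReal < (q a).toReal}
  set Tq := {a | exp (2 * c) * (q a).toReal < (p a).toReal}
  have hsub : {a | exp (-(2 * c)) ≤ (q a).toReal / (p a).toReal ∧
      (q a).toReal / (p a).toReal ≤ exp (2 * c)}ᶜ ∩ p.support ⊆ Tp ∪ Tq := by
    rintro a ⟨ha, hsupp⟩
    have hpa : 0 < (p a).toReal :=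
      ENNReal.toReal_pos ((p.mem_support_iff a).1 hsupp) (p.apply_ne_top a)
    simp only [mem_compl_iff, mem_ofPred_eq, not_and_or, not_le] at ha
    rcases ha with ha | ha
    · right
      rw [div_lt_iff₀ hpa, exp_neg, ← div_eq_inv_mul, lt_div_iff₀ (exp_pos _)] at ha
      simpa only [Tq, mem_ofPred_eq, mul_comm] using ha
    · left
      rwa [lt_div_iff₀ hpa] at ha
  have hTp : c * prob p Tp ≤ δ := mul_prob_exp_mul_lt_le hc fun s => (hpq s).2
  have hTq : c * prob q Tq ≤ δ := mul_prob_exp_mul_lt_le hc fun s => (hpq s).1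
  have hpTq := (hpq Tq).1
  have hle := (prob_le_of_inter_support_subset p hsub).trans (prob_union_le p Tp Tq)
  nlinarith [mul_le_mul_of_nonneg_left hle hc, mul_le_mul_of_nonneg_left hpTq hc,
    mul_le_mul_of_nonneg_left hTq (exp_pos c).le]

theorem tsum_indicator_mul_log_ratio_le (hc : 0 < c) (hpq : IndistFn (prob p) (prob q) c δ) :
    ∑' a, {a | exp (-(2 * c)) ≤ (q a).toReal / (p a).toReal ∧
        (q a).toReal / (p a).toReal ≤ exp (2 * c)}.indicator
      (fun a => (q a).toReal * log ((q a).toReal / (p a).toReal)) a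
      ≤ (2 * c * exp (2 * c)) ^ 2 + (1 + c + exp c) * δ / c := by
  set S := {a | exp (-(2 * c)) ≤ (q a).toReal / (p a).toReal ∧
    (q a).toReal / (p a).toReal ≤ exp (2 * c)}
  set K := (2 * c * exp (2 * c)) ^ 2
  have hpoint : ∀ a, S.indicator (fun a => (q a).toReal * log ((q a).toReal / (p a).toReal)) a
      ≤ S.indicator (fun a => (q a).toReal + (K - 1) * (p a).toReal) a := fun a => by
    by_cases ha : a ∈ S
    · simp only [indicator_of_mem ha]
      linarith [mul_log_div_le_of_exp_neg_le ENNReal.toReal_nonneg (by positivity) ha.1 ha.2]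
    · simp [ha]
  have hsummable : Summable
      (S.indicator fun a => (q a).toReal * log ((q a).toReal / (p a).toReal)) := by
    refine Summable.of_norm_bounded (q.summable_toReal.mul_left (2 * c)) fun a => ?_
    by_cases ha : a ∈ S
    · rw [indicator_of_mem ha, Real.norm_eq_abs, abs_mul, abs_of_nonneg ENNReal.toReal_nonneg,
        mul_comm]
      exact mul_le_mul_of_nonneg_right (abs_log_le_of_exp_neg_le ha.1 ha.2)
        ENNReal.toReal_nonneg
    · rw [indicator_of_notMem ha, norm_zero]
      positivity
  have hsplit : ∑' a, S.indicator (fun a => (q a).toReal + (K - 1) * (p a).toReal) a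
      = prob q S + (K - 1) * prob p S := by
    rw [prob_eq_tsum, prob_eq_tsum, ← tsum_mul_left, ← Summable.tsum_add
      (q.summable_toReal.indicator S) ((p.summable_toReal.indicator S).mul_left _)]
    refine tsum_congr fun a => ?_
    by_cases ha : a ∈ S <;> simp [ha]
  have hcompl := mul_prob_compl_ratio_le hc.le hpq
  have hK : 0 ≤ K := sq_nonneg _
  calc _ ≤ prob q S + (K - 1) * prob p S :=
        hsplit ▸ Summable.tsum_le_tsum hpoint hsummable
          ((q.summable_toReal.add (p.summable_toReal.mul_left _)).indicator S)
    _ ≤ K + prob p Sᶜ := by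
        nlinarith [prob_le_one q S, prob_le_one p S, prob_add_prob_compl p S]
    _ ≤ K + (1 + c + exp c) * δ / c := by
        gcongr
        rwa [le_div_iff₀ hc, mul_comm]

end LikelihoodRatio

section GoodSets

variable {X Y : Type*} {n : ℕ} (μ : PMF ((Fin n → X) × Y)) (P : PMF X)

lemma condXi_congr {i : Fin n} {w w' : Fin n → X} (h : ∀ k < i, w k = w' k) (a : Y) :
    condXi μ i a w = condXi μ i a w' := by
  have hpre : ∀ x, PrefixEq i w x ↔ PrefixEq i w' x := fun x =>
    forall₂_congr fun k hk => by rw [h k hk]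
  funext O
  simp only [condXi, hpre]

lemma condXi_update_self (i : Fin n) (a : Y) (w : Fin n → X) (v : X) :
    condXi μ i a (update w i v) = condXi μ i a w :=
  condXi_congr μ (fun _ hk => update_of_ne hk.ne v w) a

lemma mem_Gset_congr {j : Fin n} {ε δ : ℝ} {w w' : Fin n → X} (h : ∀ k ≤ j, w k = w' k)
    (a : Y) : (a, w) ∈ Gset μ P j ε δ ↔ (a, w') ∈ Gset μ P j ε δ := by
  simp only [Gset, Eset, Fset, mem_ofPred_eq, condXi_congr μ (fun k hk => h k hk.le) a,
    h j le_rfl]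

lemma mem_GleSet_update_iff {i : Fin n} {ε δ : ℝ} (a : Y) (w : Fin n → X) (v : X) :
    (a, update w i v) ∈ GleSet μ P i ε δ ↔
      ((∀ j < i, (a, w) ∈ Gset μ P j ε δ) ∧ (a, w) ∈ Eset μ P i ε δ) ∧
        (a, update w i v) ∈ Fset μ P i ε := by
  have hlt : ∀ j < i, (a, update w i v) ∈ Gset μ P j ε δ ↔ (a, w) ∈ Gset μ P j ε δ :=
    fun j hj => mem_Gset_congr μ P (fun k hk => update_of_ne (hk.trans_lt hj).ne v w) a
  have hE : (a, update w i v) ∈ Eset μ P i ε δ ↔ (a, w) ∈ Eset μ P i ε δ := by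
    simp only [Eset, mem_ofPred_eq, condXi_update_self]
  simp only [GleSet, mem_ofPred_eq, le_iff_lt_or_eq, or_imp, forall_and, forall_eq]
  rw [forall₂_congr hlt, Gset, mem_ofPred_eq, hE, and_assoc]

lemma abs_Ti_le {i : Fin n} {ε δ : ℝ} (hε : 0 ≤ ε) (x : Y × (Fin n → X)) :
    |Ti μ P i ε δ x| ≤ 6 * ε * logb 2 (exp 1) := by
  by_cases hx : x ∈ GleSet μ P i ε δ
  · obtain ⟨h₁, h₂⟩ := (hx i le_rfl).2
    rw [Ti, indicator_of_mem hx, Zi, logb, logb, log_exp, abs_div,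
      abs_of_pos (log_pos one_lt_two), mul_one_div]
    exact div_le_div_of_nonneg_right (abs_log_le_of_exp_neg_le h₁ h₂) (log_pos one_lt_two).le
  · rw [Ti, indicator_of_notMem hx, abs_zero]
    exact mul_nonneg (by positivity) (logb_nonneg one_lt_two (one_le_exp zero_le_one))

lemma exists_condXi_eq_prob (i : Fin n) (a : Y) (w : Fin n → X)
    (hb : prob μ {p | p.2 = a ∧ PrefixEq i w p.1} ≠ 0) :
    ∃ q : PMF X, ∀ O, condXi μ i a w O = prob q O := by
  obtain ⟨q, hq⟩ := exists_prob_eq_prob_inter_preimage_div μ hb fun p => p.1 i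
  refine ⟨q, fun O => ?_⟩
  rw [hq, condXi]
  congr 2
  ext p
  simp only [mem_ofPred_eq, mem_inter_iff, mem_preimage, and_assoc]

lemma Ti_update_eq_indicator {i : Fin n} {ε δ : ℝ} {a : Y} {w : Fin n → X} {q : PMF X}
    (hq : ∀ O, condXi μ i a w O = prob q O)
    (hgood : (∀ j < i, (a, w) ∈ Gset μ P j ε δ) ∧ (a, w) ∈ Eset μ P i ε δ) (v : X) :
    Ti μ P i ε δ (a, update w i v) =
      {v | exp (-(6 * ε)) ≤ (q v).toReal / (P v).toReal ∧
          (q v).toReal / (P v).toReal ≤ exp (6 * ε)}.indicator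
        (fun v => logb 2 ((q v).toReal / (P v).toReal)) v := by
  have hratio : condXi μ i a (update w i v) {update w i v i} / (P (update w i v i)).toReal
      = (q v).toReal / (P v).toReal := by
    rw [condXi_update_self, update_self, hq, prob_singleton]
  set S := {v | exp (-(6 * ε)) ≤ (q v).toReal / (P v).toReal ∧
    (q v).toReal / (P v).toReal ≤ exp (6 * ε)}
  have hmem : (a, update w i v) ∈ GleSet μ P i ε δ ↔ v ∈ S := by
    rw [mem_GleSet_update_iff, and_iff_right hgood, Fset, mem_ofPred_eq, hratio]
    rfl
  by_cases hv : (a, update w i v) ∈ GleSet μ P i ε δ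
  · rw [Ti, indicator_of_mem hv, indicator_of_mem (hmem.1 hv), Zi, hratio]
  · rw [Ti, indicator_of_notMem hv, indicator_of_notMem (mt hmem.2 hv)]

end GoodSets

lemma sq_mul_exp_add_mul_div_le {ε δ : ℝ} (hε : 0 < ε) (hε2 : ε ≤ 1 / 2) (hδ : 0 ≤ δ) :
    (2 * (3 * ε) * exp (2 * (3 * ε))) ^ 2 + (1 + 3 * ε + exp (3 * ε)) * δ / (3 * ε)
      ≤ 36 * exp 6 * (ε ^ 2 + δ / ε) := by
  have h₁ : exp (2 * (3 * ε)) ^ 2 ≤ exp 6 := by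
    rw [← exp_nat_mul]; exact exp_le_exp.2 (by push_cast; linarith)
  have h₂ : exp (3 * ε) ≤ exp 6 := exp_le_exp.2 (by linarith)
  have h₃ : 1 ≤ exp 6 := one_le_exp (by norm_num)
  have hδε : 0 ≤ δ / ε := div_nonneg hδ hε.le
  have hsplit : (1 + 3 * ε + exp (3 * ε)) * δ / (3 * ε)
      = (1 + 3 * ε + exp (3 * ε)) / 3 * (δ / ε) := by
    field_simp
  rw [hsplit, mul_pow, mul_add]
  gcongr ?_ + ?_
  · nlinarith [sq_nonneg ε]
  · exact mul_le_mul_of_nonneg_right (by linarith) hδε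

theorem tsum_Ti_mul_prob_div_le {X Y : Type*} {n : ℕ} (μ : PMF ((Fin n → X) × Y)) (P : PMF X)
    (i : Fin n) {ε δ : ℝ} (hε : 0 < ε) (hε2 : ε ≤ 1 / 2) (hδ : 0 ≤ δ) (a : Y) (w : Fin n → X) :
    (∑' v, Ti μ P i ε δ (a, update w i v) * prob μ {p | p.2 = a ∧ PrefixEq i w p.1 ∧ p.1 i = v}) /
        prob μ {p | p.2 = a ∧ PrefixEq i w p.1}
      ≤ 36 * exp 6 / log 2 * (ε ^ 2 + δ / ε) := by
  have hC : 0 ≤ 36 * exp 6 / log 2 * (ε ^ 2 + δ / ε) := by positivity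
  rcases (prob_nonneg μ {p | p.2 = a ∧ PrefixEq i w p.1}).eq_or_lt with hb | hb
  · rw [← hb, div_zero]; exact hC
  obtain ⟨q, hq⟩ := exists_condXi_eq_prob μ i a w hb.ne'
  have hcond : ∀ v, prob μ {p | p.2 = a ∧ PrefixEq i w p.1 ∧ p.1 i = v} /
      prob μ {p | p.2 = a ∧ PrefixEq i w p.1} = (q v).toReal := fun v => by
    rw [← prob_singleton, ← hq]
    rfl
  rw [← tsum_div_const, tsum_congr fun v => by rw [mul_div_assoc, hcond]]
  by_cases hgood : (∀ j < i, (a, w) ∈ Gset μ P j ε δ) ∧ (a, w) ∈ Eset μ P i ε δ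
  swap
  · have hT : ∀ v, Ti μ P i ε δ (a, update w i v) = 0 := fun v =>
      indicator_of_notMem (fun h => hgood ((mem_GleSet_update_iff μ P a w v).1 h).1) _
    simp only [hT, zero_mul, tsum_zero]
    exact hC
  have hind : IndistFn (prob P) (prob q) (3 * ε) δ := by
    simpa only [Eset, mem_ofPred_eq, hq] using hgood.2
  simp_rw [Ti_update_eq_indicator μ P hq hgood, show 6 * ε = 2 * (3 * ε) by ring]
  set S := {v | exp (-(2 * (3 * ε))) ≤ (q v).toReal / (P v).toReal ∧
    (q v).toReal / (P v).toReal ≤ exp (2 * (3 * ε))}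
  have hT : ∀ v, S.indicator (fun v => logb 2 ((q v).toReal / (P v).toReal)) v * (q v).toReal
      = S.indicator (fun v => (q v).toReal * log ((q v).toReal / (P v).toReal)) v / log 2 :=
    fun v => by by_cases hv : v ∈ S <;> simp [hv, logb, mul_comm, mul_div_assoc]
  rw [tsum_congr hT, tsum_div_const, div_mul_eq_mul_div]
  exact div_le_div_of_nonneg_right ((tsum_indicator_mul_log_ratio_le (by positivity) hind).trans
    (sq_mul_exp_add_mul_div_le hε hε2 hδ)) (log_pos one_lt_two).le

/-- **Lemma 3.9.**  There is an absolute constant `C > 0` such that: if `A` is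
`(ε,δ)`-differentially private, `X ∼ P^n`, `ε ∈ (0,1/2]` and `δ̂ ∈ (0, ε/15]`, then
(1) `|T_i(A(X), X₁^i)| ≤ 6ε·log₂ e` with probability 1, and
(2) for every `(a, w₁^{i-1}) ∈ Y × X^{i-1}`,
`E[T_i(A(X), X₁^i) | A(X) = a, X₁^{i-1} = w₁^{i-1}] ≤ C·(ε² + δ̂/ε)`,
where the constant `C` does not depend on `n` or `i`. -/
theorem stmt_11 : ∃ C : ℝ, 0 < C ∧
    ∀ (X Y : Type) [Countable X] (n : ℕ) (A : (Fin n → X) → PMF Y) (ε δ δhat : ℝ),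
      DiffPrivate A ε δ → 0 < ε → ε ≤ 1 / 2 → 0 < δhat → δhat ≤ ε / 15 →
      ∀ (P : PMF X) (i : Fin n),
        prob (jointPMF (iidPMF P n) A)
            {p | |Ti (jointPMF (iidPMF P n) A) P i ε δhat (p.2, p.1)| ≤
                   6 * ε * Real.logb 2 (Real.exp 1)} = 1 ∧
        ∀ (a : Y) (w : Fin n → X),
          (∑' v : X,
              Ti (jointPMF (iidPMF P n) A) P i ε δhat (a, Function.update w i v) *
                prob (jointPMF (iidPMF P n) A)
                  {p | p.2 = a ∧ PrefixEq i w p.1 ∧ p.1 i = v}) /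
            prob (jointPMF (iidPMF P n) A) {p | p.2 = a ∧ PrefixEq i w p.1}
          ≤ C * (ε ^ 2 + δhat / ε) := by
  refine ⟨36 * exp 6 / log 2, by positivity, ?_⟩
  intro X Y _ n A ε δ δhat _ hε hε2 hδhat _ P i
  refine ⟨?_, tsum_Ti_mul_prob_div_le _ P i hε hε2 hδhat.le⟩
  convert prob_univ (jointPMF (iidPMF P n) A)
  exact eq_univ_of_forall fun p => abs_Ti_le _ P hε.le (p.2, p.1)
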